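/- With B and L as above, for any Δ ∈ [0,T], the probability P({B ≤ Δ < B+L}ᶜ ∩ {B = 0}ᶜ), i.e. the probability that the point is alive neither at time 0 nor at time Δ, equals (T + e^{-Δ} − 1)/(1+T). -/

import Mathlib

open MeasureTheory ProbabilityTheory Real

open Set
open scoped ENNReal

noncomputable def nu : Measure ℝ :=
  volume.withDensity fun x => ENNReal.ofReal (if 0 ≤ x then Real.exp (-x) else 0)

lemma nu_apply (s : Set ℝ) (hs : MeasurableSet s) :
    nu s = ∫⁻ x in s, ENNReal.ofReal (if 0 ≤ x then Real.exp (-x) else 0) := by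
  rw [nu, withDensity_apply _ hs]

lemma nu_Iio_zero : nu (Set.Iio 0) = 0 := by
  rw [nu_apply _ measurableSet_Iio]
  have : ∫⁻ x in Set.Iio (0:ℝ), ENNReal.ofReal (if 0 ≤ x then Real.exp (-x) else 0)
      = ∫⁻ _x in Set.Iio (0:ℝ), 0 :=
    setLIntegral_congr_fun measurableSet_Iio
      (fun x (hx : x < 0) => by simp [not_le.mpr hx])
  rw [this]; simp

lemma nu_Iic (t : ℝ) (ht : 0 ≤ t) : nu (Set.Iic t) = ENNReal.ofReal (1 - Real.exp (-t)) := by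
  have hsplit : Set.Iic t = Set.Iio 0 ∪ Set.Icc 0 t := by
    ext x; simp only [mem_Iic, mem_union, mem_Iio, mem_Icc]
    constructor
    · intro h; rcases lt_or_ge x 0 with h0 | h0
      · exact Or.inl h0
      · exact Or.inr ⟨h0, h⟩
    · rintro (h | ⟨_, h⟩)
      · linarith
      · exact h
  rw [hsplit, measure_union (by
      rw [Set.disjoint_left]; intro x hx hx2; exact absurd hx2.1 (not_le.mpr hx))
    measurableSet_Icc, nu_Iio_zero, zero_add]
  rw [nu_apply _ measurableSet_Icc]
  have h1 : ∫⁻ x in Set.Icc 0 t, ENNReal.ofReal (if 0 ≤ x then Real.exp (-x) else 0)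
      = ∫⁻ x in Set.Icc 0 t, ENNReal.ofReal (Real.exp (-x)) :=
    setLIntegral_congr_fun measurableSet_Icc
      (fun x hx => by rw [if_pos hx.1])
  rw [h1, ← ofReal_integral_eq_lintegral_ofReal]
  · congr 1
    have h2 : ∫ x in Set.Icc 0 t, Real.exp (-x) = ∫ x in (0:ℝ)..t, Real.exp (-x) := by
      rw [intervalIntegral.integral_of_le ht, integral_Icc_eq_integral_Ioc]
    rw [h2, intervalIntegral.integral_comp_neg (fun x => Real.exp x), integral_exp]
    simp
  · exact (continuous_exp.comp continuous_neg).continuousOn.integrableOn_compact isCompact_Icc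
  · exact Filter.Eventually.of_forall fun x => (Real.exp_pos _).le

lemma nu_univ : nu Set.univ = 1 := by
  have hsplit : (Set.univ : Set ℝ) = Set.Iio 0 ∪ Set.Ici 0 := by
    ext x; simp only [mem_univ, true_iff, mem_union, mem_Iio, mem_Ici]; exact lt_or_ge x 0
  rw [hsplit, measure_union (by
      rw [Set.disjoint_left]; intro x hx hx2; exact (not_le.mpr hx) (mem_Ici.mp hx2))
    measurableSet_Ici, nu_Iio_zero, zero_add]
  rw [nu_apply _ measurableSet_Ici]
  have h1 : ∫⁻ x in Set.Ici (0:ℝ), ENNReal.ofReal (if 0 ≤ x then Real.exp (-x) else 0)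
      = ∫⁻ x in Set.Ici (0:ℝ), ENNReal.ofReal (Real.exp (-x)) :=
    setLIntegral_congr_fun measurableSet_Ici
      (fun x hx => by rw [if_pos (mem_Ici.mp hx)])
  have h0 : (Set.Ici (0:ℝ)) =ᵐ[volume] Set.Ioi 0 := Ioi_ae_eq_Ici.symm
  rw [h1, setLIntegral_congr h0, ← ofReal_integral_eq_lintegral_ofReal]
  · rw [integral_exp_neg_Ioi_zero]; simp
  · exact (exp_neg_integrableOn_Ioi 0 one_pos).congr
      (Filter.Eventually.of_forall fun x => by simp)
  · exact Filter.Eventually.of_forall fun x => (Real.exp_pos _).le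

instance : IsProbabilityMeasure nu := ⟨nu_univ⟩

/-- With `B` and `L` as before, for `Δ ∈ [0,T]`, the probability that the point is
alive neither at time `0` nor at time `Δ`, i.e. `P({B ≤ Δ < B+L}ᶜ ∩ {B = 0}ᶜ)`, equals
`(T + e^{-Δ} − 1)/(1+T)`. -/
theorem birth_death_dead_at_both (T Δ : ℝ) (hT : 0 < T) (hΔ0 : 0 ≤ Δ) (hΔT : Δ ≤ T)
    (μB μL : Measure ℝ)
    (hμB : μB = (ENNReal.ofReal (1 / (1 + T))) • Measure.dirac (0 : ℝ)
      + (ENNReal.ofReal (1 / (1 + T))) • volume.restrict (Set.Icc 0 T))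
    (hμL : μL = volume.withDensity fun x => ENNReal.ofReal (if 0 ≤ x then Real.exp (-x) else 0)) :
    (μB.prod μL) ({p : ℝ × ℝ | p.1 ≤ Δ ∧ Δ < p.1 + p.2}ᶜ ∩ {p : ℝ × ℝ | p.1 = 0}ᶜ)
      = ENNReal.ofReal ((T + Real.exp (-Δ) - 1) / (1 + T)) := by
  have hμLnu : μL = nu := hμL
  subst hμB hμLnu
  set S : Set (ℝ × ℝ) := {p : ℝ × ℝ | p.1 ≤ Δ ∧ Δ < p.1 + p.2}ᶜ ∩ {p : ℝ × ℝ | p.1 = 0}ᶜ with hSdef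
  have hSm : MeasurableSet S := by
    apply MeasurableSet.inter
    · exact ((measurableSet_le measurable_fst measurable_const).inter
        (measurableSet_lt measurable_const (measurable_fst.add measurable_snd))).compl
    · exact (measurable_fst (measurableSet_singleton (0:ℝ))).compl
  rw [Measure.prod_apply hSm]
  set f : ℝ → ℝ≥0∞ := fun b => nu (Prod.mk b ⁻¹' S) with hf
  have hfm : Measurable f := measurable_measure_prodMk_left hSm
  have hf0 : f 0 = 0 := by
    have : Prod.mk (0:ℝ) ⁻¹' S = ∅ := by
      ext ℓ; simp [hSdef]
    rw [hf]; simp only [this, measure_empty]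
  set g : ℝ → ℝ≥0∞ := fun b =>
    if b ≤ Δ then ENNReal.ofReal (1 - Real.exp (-(Δ - b))) else 1 with hg
  have hfg : ∀ b : ℝ, b ≠ 0 → f b = g b := by
    intro b hb
    rcases le_or_gt b Δ with hbΔ | hbΔ
    · have hpre : Prod.mk b ⁻¹' S = Set.Iic (Δ - b) := by
        ext ℓ
        simp only [hSdef, Set.mem_preimage, Set.mem_inter_iff, Set.mem_compl_iff,
          Set.mem_setOf_eq, Set.mem_Iic]
        constructor
        · rintro ⟨h1, _⟩
          by_contra hc
          push_neg at hc
          exact h1 ⟨hbΔ, by linarith⟩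
        · intro h
          exact ⟨fun ⟨_, h2⟩ => by linarith, hb⟩
      rw [hf]; simp only [hpre]
      rw [nu_Iic _ (by linarith), hg]
      simp [hbΔ]
    · have hpre : Prod.mk b ⁻¹' S = Set.univ := by
        ext ℓ
        simp only [hSdef, Set.mem_preimage, Set.mem_inter_iff, Set.mem_compl_iff,
          Set.mem_setOf_eq, Set.mem_univ, iff_true]
        exact ⟨fun ⟨h1, _⟩ => absurd h1 (not_le.mpr hbΔ), hb⟩
      rw [hf]; simp only [hpre]
      rw [nu_univ, hg]
      simp [not_le.mpr hbΔ]
  -- integrate over μB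
  rw [lintegral_add_measure, lintegral_smul_measure, lintegral_smul_measure,
    lintegral_dirac' _ hfm, hf0, smul_zero, zero_add, smul_eq_mul]
  -- replace f by g a.e. on Icc 0 T
  have hae : f =ᵐ[volume.restrict (Set.Icc 0 T)] g := by
    have h0 : ∀ᵐ b ∂(volume.restrict (Set.Icc 0 T)), b ≠ (0:ℝ) := by
      refine (ae_restrict_iff' measurableSet_Icc).mpr ?_
      have : volume ({(0:ℝ)}) = 0 := volume_singleton
      filter_upwards [measure_eq_zero_iff_ae_notMem.mp this] with b hb _ using hb
    filter_upwards [h0] with b hb using hfg b hb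
  rw [lintegral_congr_ae hae]
  -- split the integral
  have hsplit : Set.Icc (0:ℝ) T = Set.Icc 0 Δ ∪ Set.Ioc Δ T := (Set.Icc_union_Ioc_eq_Icc hΔ0 hΔT).symm
  have hdisj : Disjoint (Set.Icc (0:ℝ) Δ) (Set.Ioc Δ T) := by
    rw [Set.disjoint_left]; rintro x ⟨_, h1⟩ ⟨h2, _⟩; linarith
  rw [hsplit, lintegral_union measurableSet_Ioc hdisj]
  have hI1 : ∫⁻ b in Set.Icc 0 Δ, g b = ENNReal.ofReal (Δ - (1 - Real.exp (-Δ))) := by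
    have h1 : ∫⁻ b in Set.Icc 0 Δ, g b
        = ∫⁻ b in Set.Icc 0 Δ, ENNReal.ofReal (1 - Real.exp (-(Δ - b))) :=
      setLIntegral_congr_fun measurableSet_Icc
        (fun b hb => by rw [hg]; simp [hb.2])
    rw [h1, ← ofReal_integral_eq_lintegral_ofReal]
    · congr 1
      have h2 : ∫ b in Set.Icc 0 Δ, (1 - Real.exp (-(Δ - b)))
          = ∫ b in (0:ℝ)..Δ, (1 - Real.exp (-(Δ - b))) := by
        rw [intervalIntegral.integral_of_le hΔ0, integral_Icc_eq_integral_Ioc]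
      rw [h2]
      have h3 : ∀ b : ℝ, -(Δ - b) = b - Δ := fun b => by ring
      simp_rw [h3]
      rw [intervalIntegral.integral_sub intervalIntegrable_const
        (((continuous_sub_right Δ).rexp).intervalIntegrable _ _)]
      rw [intervalIntegral.integral_const]
      have h4 : ∫ b in (0:ℝ)..Δ, Real.exp (b - Δ)
          = ∫ b in (0:ℝ) - Δ..Δ - Δ, Real.exp b :=
        (intervalIntegral.integral_comp_sub_right (fun x => Real.exp x) Δ)
      rw [h4, integral_exp]
      simp
    · exact ((continuous_const.sub (((continuous_const.sub continuous_id).neg).rexp)).continuousOn).integrableOn_compact isCompact_Icc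
    · refine (ae_restrict_iff' measurableSet_Icc).mpr
        (Filter.Eventually.of_forall fun b hb => ?_)
      have : Real.exp (-(Δ - b)) ≤ 1 := Real.exp_le_one_iff.mpr (by linarith [hb.2])
      show (0:ℝ) ≤ 1 - Real.exp (-(Δ - b))
      linarith
  have hI2 : ∫⁻ b in Set.Ioc Δ T, g b = ENNReal.ofReal (T - Δ) := by
    have h1 : ∫⁻ b in Set.Ioc Δ T, g b = ∫⁻ _b in Set.Ioc Δ T, 1 :=
      setLIntegral_congr_fun measurableSet_Ioc
        (fun b hb => by rw [hg]; simp [not_le.mpr hb.1])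
    rw [h1, setLIntegral_one, Real.volume_Ioc]
  rw [hI1, hI2, ← ENNReal.ofReal_add (by nlinarith [Real.add_one_le_exp (-Δ)]) (by linarith)]
  rw [← ENNReal.ofReal_mul (by positivity)]
  congr 1
  field_simp
  ring
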